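/- Let (M, b) be a lattice and x ∈ M \ ker(b); let s = s_b(x) and write b(x, x) = s·c0. If s + c0 ≠ 0, then the (−)-modification by x of (M, m^+_x(b)) equals (M, b), i.e. m^−_x(m^+_x(b)) = b. If s − c0 ≠ 0, then the (+)-modification by x of (M, m^−_x(b)) equals (M, b), i.e. m^+_x(m^−_x(b)) = b. -/

import Mathlib

/-!
The scale of `x` is attained: the values `b(x, m)` form a subgroup of `ℤ`, whose
generator is `± s`. Hence `u := b(x, ·) / s` takes the value `1`, and both modified
forms satisfy `m^±_x(b)(x, m) = (s ± c0) · u(m)`. A functional `d · u` with `u`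
attaining `1` has scale `|d|`, so for `d ≠ 0` the correction term of the second
modification is `(d u(α) / |d|) (d u(β) / |d|) = u(α) u(β)`, exactly the term added by the first.
If `s = 0` then `x` lies in the kernel and every term vanishes.
-/

def IsScale {M : Type*} (b : M → M → ℤ) (x : M) (s : ℤ) : Prop :=
  (s = 0 ∧ ∀ m, b x m = 0) ∨
  (0 < s ∧ (∀ m, s ∣ b x m) ∧ ∀ t : ℤ, 0 < t → (∀ m, t ∣ b x m) → t ≤ s)

theorem Int.mul_ediv_abs_mul_mul_ediv_abs {d : ℤ} (hd : d ≠ 0) (a b : ℤ) :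
    d * a / |d| * (d * b / |d|) = a * b := by
  rcases abs_choice d with h | h <;>
    simp [h, Int.ediv_neg, Int.mul_ediv_cancel_left _ hd]

namespace IsScale

variable {M : Type*} {B : M → M → ℤ} {x : M} {s t : ℤ}

theorem dvd (hs : IsScale B x s) (m : M) : s ∣ B x m := by
  rcases hs with ⟨rfl, h0⟩ | ⟨-, hdvd, -⟩
  · simp [h0]
  · exact hdvd m

theorem eq_zero_iff (hs : IsScale B x s) : s = 0 ↔ ∀ m, B x m = 0 := by
  rcases hs with ⟨rfl, h0⟩ | ⟨hspos, -, hsmax⟩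
  · exact iff_of_true rfl h0
  · refine iff_of_false hspos.ne' fun h0 => ?_
    have := hsmax (s + 1) (by omega) (fun m => by simp [h0])
    omega

theorem unique (hs : IsScale B x s) (ht : IsScale B x t) : s = t := by
  by_cases h0 : ∀ m, B x m = 0
  · rw [hs.eq_zero_iff.mpr h0, ht.eq_zero_iff.mpr h0]
  rcases hs with ⟨-, h⟩ | ⟨hspos, hsdvd, hsmax⟩
  · exact absurd h h0
  rcases ht with ⟨-, h⟩ | ⟨htpos, htdvd, htmax⟩
  · exact absurd h h0
  exact le_antisymm (htmax s hspos hsdvd) (hsmax t htpos htdvd)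

end IsScale

section

variable {M : Type*} {B : M → M → ℤ} {x : M}

theorem isScale_abs_of_dvd {g : ℤ} (hg : ∀ m, g ∣ B x m) {m₀ : M} (hm₀ : B x m₀ = g) :
    IsScale B x |g| := by
  rcases eq_or_ne g 0 with rfl | hg0
  · exact .inl ⟨abs_zero, fun m => zero_dvd_iff.mp (hg m)⟩
  · refine .inr ⟨abs_pos.mpr hg0, fun m => (abs_dvd _ _).mpr (hg m), fun t ht htdvd => ?_⟩
    exact Int.le_of_dvd (abs_pos.mpr hg0) ((dvd_abs _ _).mpr (hm₀ ▸ htdvd m₀))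

theorem isScale_abs_of_eq_mul {d : ℤ} {u : M → ℤ} (hB : ∀ m, B x m = d * u m)
    {m₀ : M} (hu : u m₀ = 1) : IsScale B x |d| :=
  isScale_abs_of_dvd (fun m => hB m ▸ dvd_mul_right d (u m)) (by rw [hB, hu, mul_one])

theorem IsScale.ediv_mul_ediv_eq {s d : ℤ} {u : M → ℤ} (hs : IsScale B x s)
    (hB : ∀ m, B x m = d * u m) {m₀ : M} (hu : u m₀ = 1) (hd : d ≠ 0) (α β : M) :
    B x α / s * (B x β / s) = u α * u β := by
  obtain rfl := hs.unique (isScale_abs_of_eq_mul hB hu)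
  rw [hB, hB, Int.mul_ediv_abs_mul_mul_ediv_abs hd]

end

theorem IsScale.exists_apply_eq {M : Type*} [AddCommGroup M] {b : M →+ M →+ ℤ} {x : M}
    {s : ℤ} (hs : IsScale (fun m n => b m n) x s) : ∃ m₀, b x m₀ = s := by
  obtain ⟨g, hg⟩ := Int.subgroup_cyclic (b x).range
  rw [← AddSubgroup.zmultiples_eq_closure] at hg
  have hgdvd : ∀ m, g ∣ b x m := fun m => Int.mem_zmultiples_iff.mp (hg ▸ ⟨m, rfl⟩)
  obtain ⟨n₀, hn₀⟩ : g ∈ (b x).range := hg ▸ AddSubgroup.mem_zmultiples g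
  obtain rfl := hs.unique (isScale_abs_of_dvd hgdvd hn₀)
  rcases abs_choice g with h | h
  · exact ⟨n₀, by rw [h, hn₀]⟩
  · exact ⟨-n₀, by rw [h, map_neg, hn₀]⟩

theorem modification_inverse_general
    {M : Type*} [AddCommGroup M]
    (b : M →+ M →+ ℤ)
    (x : M)
    (s c0 : ℤ)
    (hs : IsScale (fun m n => b m n) x s)
    (hc0 : b x x = s * c0) :
    (∀ s2 : ℤ, s + c0 ≠ 0 →
      IsScale (fun α β => b α β + b x α / s * (b x β / s)) x s2 →
      ∀ α β : M,
        (b α β + b x α / s * (b x β / s)) -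
            ((b x α + b x x / s * (b x α / s)) / s2) *
              ((b x β + b x x / s * (b x β / s)) / s2) = b α β) ∧
    (∀ s2 : ℤ, s - c0 ≠ 0 →
      IsScale (fun α β => b α β - b x α / s * (b x β / s)) x s2 →
      ∀ α β : M,
        (b α β - b x α / s * (b x β / s)) +
            ((b x α - b x x / s * (b x α / s)) / s2) *
              ((b x β - b x x / s * (b x β / s)) / s2) = b α β) := by
  rcases eq_or_ne s 0 with rfl | hs0
  · simp [hs.eq_zero_iff.mp rfl]
  obtain ⟨m₀, hm₀⟩ := hs.exists_apply_eq
  have hu : b x m₀ / s = 1 := by rw [hm₀, Int.ediv_self hs0]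
  have hb : ∀ m, b x m = s * (b x m / s) := fun m => (Int.mul_ediv_cancel' (hs.dvd m)).symm
  have hc : b x x / s = c0 := by rw [hc0, Int.mul_ediv_cancel_left _ hs0]
  refine ⟨fun s2 hd hs2 α β => ?_, fun s2 hd hs2 α β => ?_⟩
  · have key := hs2.ediv_mul_ediv_eq (d := s + c0) (u := fun m => b x m / s)
      (fun m => by rw [hc]; linear_combination hb m) hu hd α β
    beta_reduce at key
    rw [key, add_sub_cancel_right]
  · have key := hs2.ediv_mul_ediv_eq (d := s - c0) (u := fun m => b x m / s)
      (fun m => by rw [hc]; linear_combination hb m) hu hd α β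
    beta_reduce at key
    rw [key, sub_add_cancel]

/-- Let `(M, b)` be a lattice and `x ∈ M \ ker(b)`; let `s = s_b(x)` and
write `b(x, x) = s·c0`.  If `s + c0 ≠ 0`, then the (−)-modification by `x` of
`(M, m^+_x(b))` equals `(M, b)`, i.e. `m^−_x(m^+_x(b)) = b`; if `s − c0 ≠ 0`, then the
(+)-modification by `x` of `(M, m^−_x(b))` equals `(M, b)`, i.e. `m^+_x(m^−_x(b)) = b`.
(Here `s2` denotes the scale of `x` with respect to the modified form.) -/
theorem modification_inverse
    {M : Type*} [AddCommGroup M] [Module.Free ℤ M] [Module.Finite ℤ M]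
    (b : M →+ M →+ ℤ) (hbsymm : ∀ x y, b x y = b y x)
    (x : M) (hx : ¬ ∀ m, b x m = 0)
    (s c0 : ℤ)
    (hs : IsScale (fun m n => b m n) x s)
    (hc0 : b x x = s * c0) :
    (∀ s2 : ℤ, s + c0 ≠ 0 →
      IsScale (fun α β => b α β + b x α / s * (b x β / s)) x s2 →
      ∀ α β : M,
        (b α β + b x α / s * (b x β / s)) -
            ((b x α + b x x / s * (b x α / s)) / s2) *
              ((b x β + b x x / s * (b x β / s)) / s2) = b α β) ∧
    (∀ s2 : ℤ, s - c0 ≠ 0 →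
      IsScale (fun α β => b α β - b x α / s * (b x β / s)) x s2 →
      ∀ α β : M,
        (b α β - b x α / s * (b x β / s)) +
            ((b x α - b x x / s * (b x α / s)) / s2) *
              ((b x β - b x x / s * (b x β / s)) / s2) = b α β) :=
  modification_inverse_general b x s c0 hs hc0
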